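/- Let M be a Hilbert C*-module over ℂ^{m×m}, let w_1,…,w_n ∈ M, and let G be the n×n ℂ^{m×m}-valued Gram matrix with (s,t)-block ⟨w_s, w_t⟩, viewed as an mn×mn complex matrix with eigendecomposition G = V Σ V* where Σ = diag(σ_1,…,σ_l), σ_1 ≥ … ≥ σ_l > 0 are the nonzero eigenvalues, and v_s is the s-th column of V. Define p_s := σ_s^{-1/2} W[v_s, 0, …, 0] (the element of M obtained by acting W = [w_1,…,w_n] on the ℂ^{m×m}-vector whose first columns come from v_s and remaining columns are zero). Then {p_s}_{s=1}^l is an orthonormal system: ⟨p_s, p_s⟩ is a rank-one orthogonal projection in ℂ^{m×m} and ⟨p_s, p_t⟩ = 0 for s ≠ t; moreover every w_t lies in the ℂ^{m×m}-linear span of {p_s}_{s=1}^l. -/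

import Mathlib

open scoped Matrix.Norms.L2Operator ComplexOrder

/-- A Hilbert C*-module over the C*-algebra `ℂ^{m×m}` of `m × m` complex matrices (with the
operator norm): a right module with a matrix-valued inner product inducing the norm of `M`. -/
structure HilbertModuleMat (m : ℕ) (M : Type*) [NormedAddCommGroup M] where
  smul : M → Matrix (Fin m) (Fin m) ℂ → M
  inner : M → M → Matrix (Fin m) (Fin m) ℂ
  smul_add_vec : ∀ (u v : M) c, smul (u + v) c = smul u c + smul v c
  smul_add_alg : ∀ (u : M) c d, smul u (c + d) = smul u c + smul u d
  smul_mul : ∀ (u : M) c d, smul u (c * d) = smul (smul u c) d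
  smul_one : ∀ u : M, smul u 1 = u
  inner_add_right : ∀ u v w : M, inner u (v + w) = inner u v + inner u w
  inner_smul_right : ∀ (u v : M) c, inner u (smul v c) = inner u v * c
  inner_conj : ∀ u v : M, inner v u = star (inner u v)
  inner_self_posSemidef : ∀ u : M, (inner u u).PosSemidef
  inner_definite : ∀ u : M, inner u u = 0 → u = 0
  norm_eq : ∀ u : M, ‖u‖ = Real.sqrt ‖inner u u‖

/-- A vector `q` is *normalized* if `⟨q,q⟩` is a nonzero idempotent. -/
def HilbertModuleMat.Normalized {m : ℕ} {M : Type*} [NormedAddCommGroup M]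
    (h : HilbertModuleMat m M) (q : M) : Prop :=
  h.inner q q ≠ 0 ∧ h.inner q q * h.inner q q = h.inner q q

/-!
With `W c = ∑ t, w t * c t` and `G` the Gram matrix, a direct computation gives
`⟨W[x, 0, …, 0], W[y, 0, …, 0]⟩ = ((G x)* y) E₀₀` and
`⟨W[x, 0, …, 0], w t⟩ = (block t of [G x, 0, …, 0])ᴴ`. Since `G v_s = σ_s v_s` with orthonormal
`v_s`, this yields `⟨p_s, p_r⟩ = δ_{sr} E₀₀`, a rank-one projection. Expanding
`G_{tt} = ∑ s, σ_s v_s v_s*` gives Parseval's identity `⟨w t, w t⟩ = ∑ s, ⟨p_s, w t⟩* ⟨p_s, w t⟩`,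
which forces `w t` into the span of the `p_s`.
-/

open Matrix

lemma Matrix.mulVec_eq_smul_of_eq_sum {ι κ R : Type*} [Fintype ι] [Fintype κ] [DecidableEq κ]
    [CommSemiring R] [StarRing R] {G : Matrix ι ι R} {σ : κ → R} {v : κ → ι → R}
    (hortho : ∀ s t, star (v s) ⬝ᵥ v t = if s = t then 1 else 0)
    (hdecomp : ∀ a b, G a b = ∑ s, σ s * v s a * star (v s b)) (s : κ) :
    G *ᵥ v s = σ s • v s := by
  ext a
  have hterm : ∀ r, ∑ b, σ r * v r a * star (v r b) * v s b = σ r * v r a * (star (v r) ⬝ᵥ v s) :=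
    fun r => by simp only [dotProduct, Finset.mul_sum, Pi.star_apply, mul_assoc]
  simp only [mulVec, dotProduct, hdecomp, Finset.sum_mul]
  rw [Finset.sum_comm]
  simp [hterm, hortho]

lemma Matrix.mulVec_inv_sqrt_smul {ι : Type*} [Fintype ι] {G : Matrix ι ι ℂ} {x : ι → ℂ} {c : ℝ}
    (hc : 0 < c) (hx : G *ᵥ x = (c : ℂ) • x) :
    G *ᵥ (((√c : ℝ) : ℂ)⁻¹ • x) = ((√c : ℝ) : ℂ) • x := by
  have hsqrt : ((√c : ℝ) : ℂ) ≠ 0 := by exact_mod_cast (Real.sqrt_pos.2 hc).ne'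
  have hsq : (c : ℂ) = (√c : ℝ) * (√c : ℝ) := by
    rw [← Complex.ofReal_mul, Real.mul_self_sqrt hc.le]
  rw [mulVec_smul, hx, smul_smul, hsq, inv_mul_cancel_left₀ hsqrt]

lemma Matrix.isStarProjection_single_one {n R : Type*} [DecidableEq n] [Fintype n] [Semiring R]
    [StarRing R] (i : n) : IsStarProjection (single i i (1 : R)) :=
  ⟨by simp [IsIdempotentElem], by simp [IsSelfAdjoint, star_eq_conjTranspose]⟩

lemma Matrix.rank_single_self {n K : Type*} [DecidableEq n] [Fintype n] [Field K] (i : n)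
    {c : K} (hc : c ≠ 0) : (single i i c).rank = 1 := by
  classical
  rw [← diagonal_single, rank_diagonal, Fintype.card_eq_one_iff]
  refine ⟨⟨i, by simpa using hc⟩, fun ⟨j, hj⟩ => ?_⟩
  by_cases hji : j = i
  · subst hji; rfl
  · simp [hji] at hj

namespace HilbertModuleMat

variable {m : ℕ} {M : Type*} [NormedAddCommGroup M] (h : HilbertModuleMat m M)

lemma inner_sum_right {ι : Type*} (s : Finset ι) (u : M) (f : ι → M) :
    h.inner u (∑ i ∈ s, f i) = ∑ i ∈ s, h.inner u (f i) :=
  map_sum (AddMonoidHom.mk' (h.inner u) (h.inner_add_right u)) f s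

lemma inner_smul_left (u v : M) (c : Matrix (Fin m) (Fin m) ℂ) :
    h.inner (h.smul u c) v = star c * h.inner u v := by
  rw [h.inner_conj v, h.inner_smul_right, star_mul, ← h.inner_conj]

lemma star_inner_apply (u v : M) (i j : Fin m) : star (h.inner u v i j) = h.inner v u j i := by
  rw [h.inner_conj u v, star_apply]

lemma inner_sum_smul_left {ι : Type*} (s : Finset ι) (p : ι → M)
    (c : ι → Matrix (Fin m) (Fin m) ℂ) (u : M) :
    h.inner (∑ i ∈ s, h.smul (p i) (c i)) u = ∑ i ∈ s, star (c i) * h.inner (p i) u := by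
  rw [h.inner_conj u, inner_sum_right, star_sum]
  refine Finset.sum_congr rfl fun i _ => ?_
  rw [h.inner_smul_right, star_mul, ← h.inner_conj]

lemma inner_sub_right (u a b : M) : h.inner u (a - b) = h.inner u a - h.inner u b :=
  map_sub (AddMonoidHom.mk' (h.inner u) (h.inner_add_right u)) a b

lemma inner_sub_left (u a b : M) : h.inner (a - b) u = h.inner a u - h.inner b u := by
  rw [h.inner_conj u, inner_sub_right, star_sub, ← h.inner_conj, ← h.inner_conj]

lemma smul_inner_self_of_isStarProjection {p : M} (hp : IsStarProjection (h.inner p p)) :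
    h.smul p (h.inner p p) = p := by
  have hidem := hp.isIdempotentElem.eq
  refine (sub_eq_zero.mp (h.inner_definite _ ?_)).symm
  rw [inner_sub_left, inner_sub_right, inner_sub_right, h.inner_smul_right, inner_smul_left,
    inner_smul_left, h.inner_smul_right, hp.isSelfAdjoint.star_eq]
  simp only [hidem, sub_self]

lemma inner_self_mul_inner_of_isStarProjection {p : M} (hp : IsStarProjection (h.inner p p))
    (u : M) : h.inner p p * h.inner p u = h.inner p u := by
  conv_rhs => rw [← h.smul_inner_self_of_isStarProjection hp]
  rw [inner_smul_left, hp.isSelfAdjoint.star_eq]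

/-- The defect `w - ∑ s, p s ⟨p s, w⟩` has inner square `⟨w, w⟩ - ∑ s, ⟨p s, w⟩* ⟨p s, w⟩`. -/
lemma eq_sum_smul_inner_of_inner_self_eq_sum {ι : Type*} [Fintype ι] {p : ι → M}
    (horth : ∀ s r, s ≠ r → h.inner (p s) (p r) = 0)
    (hproj : ∀ s, IsStarProjection (h.inner (p s) (p s))) {w : M}
    (hw : h.inner w w = ∑ s, star (h.inner (p s) w) * h.inner (p s) w) :
    w = ∑ s, h.smul (p s) (h.inner (p s) w) := by
  classical
  set P := ∑ s, h.smul (p s) (h.inner (p s) w)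
  have hpP : ∀ s, h.inner (p s) P = h.inner (p s) w := fun s => by
    rw [inner_sum_right, Finset.sum_eq_single s (fun r _ hrs => by
      rw [h.inner_smul_right, horth s r (Ne.symm hrs), zero_mul]) (by simp),
      h.inner_smul_right, inner_self_mul_inner_of_isStarProjection h (hproj s)]
  have hPu : ∀ u, h.inner P u = ∑ s, star (h.inner (p s) w) * h.inner (p s) u :=
    h.inner_sum_smul_left _ _ _
  have hwP : h.inner w P = h.inner w w := by
    rw [h.inner_conj P, hPu, hw, star_sum]
    simp only [star_mul, ← h.inner_conj]
  refine (sub_eq_zero.mp (h.inner_definite _ ?_)).symm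
  rw [inner_sub_left, inner_sub_right, inner_sub_right, hwP, hPu, hPu]
  simp only [hpP, ← hw, sub_self]

def gramMatrix {ι : Type*} (w : ι → M) : Matrix (ι × Fin m) (ι × Fin m) ℂ :=
  of fun a b => h.inner (w a.1) (w b.1) a.2 b.2

end HilbertModuleMat

/-- Block `t` of the paper's `ℂ^{m×m}`-vector `[x, 0, …, 0]`. -/
def firstColumnBlocks {ι : Type*} {m : ℕ} [NeZero m] (x : ι × Fin m → ℂ) (t : ι) :
    Matrix (Fin m) (Fin m) ℂ :=
  of fun i j => if j = 0 then x (t, i) else 0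

section FirstColumnBlocks

variable {ι : Type*} {m : ℕ} [NeZero m]

lemma conjTranspose_firstColumnBlocks_mul (x y : ι × Fin m → ℂ) (t : ι) :
    (firstColumnBlocks x t)ᴴ * firstColumnBlocks y t =
      single 0 0 (∑ k, star (x (t, k)) * y (t, k)) := by
  ext i j
  simp only [mul_apply, conjTranspose_apply, firstColumnBlocks, of_apply, single_apply]
  by_cases hi : i = 0 <;> by_cases hj : j = 0 <;> simp [hi, hj, eq_comm]

lemma firstColumnBlocks_mul_conjTranspose (x y : ι × Fin m → ℂ) (t : ι) :
    firstColumnBlocks x t * (firstColumnBlocks y t)ᴴ = of fun i j => x (t, i) * star (y (t, j)) := by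
  ext i j
  simp [mul_apply, conjTranspose_apply, firstColumnBlocks]

variable {M : Type*} [NormedAddCommGroup M] (h : HilbertModuleMat m M) [Fintype ι] (w : ι → M)

lemma HilbertModuleMat.inner_sum_smul_firstColumnBlocks_left (x : ι × Fin m → ℂ) (u : ι) :
    h.inner (∑ t, h.smul (w t) (firstColumnBlocks x t)) (w u) =
      (firstColumnBlocks (h.gramMatrix w *ᵥ x) u)ᴴ := by
  rw [h.inner_sum_smul_left]
  ext i j
  simp only [Matrix.sum_apply, Matrix.mul_apply, conjTranspose_apply, firstColumnBlocks, of_apply,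
    mulVec, dotProduct, gramMatrix, Fintype.sum_prod_type]
  by_cases hi : i = 0
  · simp [hi, star_sum, h.star_inner_apply, mul_comm]
  · simp [hi]

lemma HilbertModuleMat.inner_sum_smul_firstColumnBlocks (x y : ι × Fin m → ℂ) :
    h.inner (∑ t, h.smul (w t) (firstColumnBlocks x t))
        (∑ t, h.smul (w t) (firstColumnBlocks y t)) =
      single 0 0 (star (h.gramMatrix w *ᵥ x) ⬝ᵥ y) := by
  rw [h.inner_sum_right]
  simp only [h.inner_smul_right, h.inner_sum_smul_firstColumnBlocks_left,
    conjTranspose_firstColumnBlocks_mul]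
  rw [dotProduct, Fintype.sum_prod_type]
  exact (map_sum (singleAddMonoidHom (α := ℂ) (0 : Fin m) (0 : Fin m)) _ _).symm

end FirstColumnBlocks

namespace HilbertModuleMat

section PrincipalAxes

variable {ι κ : Type*} [Fintype ι] {m : ℕ} [NeZero m] {M : Type*} [NormedAddCommGroup M]
  (h : HilbertModuleMat m M) (w : ι → M)

/-- The paper's `p_s = σ_s^{-1/2} W[v_s, 0, …, 0]`. -/
noncomputable def principalAxis (σ : κ → ℝ) (v : κ → ι × Fin m → ℂ) (s : κ) : M :=
  ∑ t, h.smul (w t) (firstColumnBlocks (((√(σ s) : ℝ) : ℂ)⁻¹ • v s) t)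

variable {σ : κ → ℝ} {v : κ → ι × Fin m → ℂ}

lemma inner_principalAxis_principalAxis [DecidableEq κ] (hσ : ∀ s, 0 < σ s)
    (hortho : ∀ s t, star (v s) ⬝ᵥ v t = if s = t then 1 else 0)
    (heig : ∀ s, h.gramMatrix w *ᵥ v s = (σ s : ℂ) • v s) (s r : κ) :
    h.inner (h.principalAxis w σ v s) (h.principalAxis w σ v r) =
      if s = r then single 0 0 1 else 0 := by
  rw [principalAxis, principalAxis, h.inner_sum_smul_firstColumnBlocks,
    mulVec_inv_sqrt_smul (hσ s) (heig s), star_smul, smul_dotProduct, dotProduct_smul, hortho]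
  split_ifs with hsr
  · subst hsr
    have hsqrt : ((√(σ s) : ℝ) : ℂ) ≠ 0 := by exact_mod_cast (Real.sqrt_pos.2 (hσ s)).ne'
    simp [hsqrt]
  · simp

lemma inner_principalAxis_left (hσ : ∀ s, 0 < σ s)
    (heig : ∀ s, h.gramMatrix w *ᵥ v s = (σ s : ℂ) • v s) (s : κ) (t : ι) :
    h.inner (h.principalAxis w σ v s) (w t) =
      (firstColumnBlocks (((√(σ s) : ℝ) : ℂ) • v s) t)ᴴ := by
  rw [principalAxis, h.inner_sum_smul_firstColumnBlocks_left, mulVec_inv_sqrt_smul (hσ s) (heig s)]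

lemma inner_self_eq_sum_inner_principalAxis [Fintype κ] (hσ : ∀ s, 0 < σ s)
    (heig : ∀ s, h.gramMatrix w *ᵥ v s = (σ s : ℂ) • v s)
    (hdecomp : ∀ a b, h.gramMatrix w a b = ∑ s, (σ s : ℂ) * v s a * star (v s b)) (t : ι) :
    h.inner (w t) (w t) = ∑ s, star (h.inner (h.principalAxis w σ v s) (w t)) *
      h.inner (h.principalAxis w σ v s) (w t) := by
  simp only [h.inner_principalAxis_left w hσ heig, star_eq_conjTranspose,
    conjTranspose_conjTranspose, firstColumnBlocks_mul_conjTranspose]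
  ext i j
  rw [show h.inner (w t) (w t) i j = h.gramMatrix w (t, i) (t, j) from rfl, hdecomp,
    Matrix.sum_apply]
  refine Finset.sum_congr rfl fun s _ => ?_
  have hsq : (σ s : ℂ) = (√(σ s) : ℝ) * (√(σ s) : ℝ) := by
    rw [← Complex.ofReal_mul, Real.mul_self_sqrt (hσ s).le]
  simp only [hsq, of_apply, Pi.smul_apply, smul_eq_mul, star_mul', Complex.star_def,
    Complex.conj_ofReal]
  ring

end PrincipalAxes

end HilbertModuleMat

theorem pca_principal_axes_general
    {m n l : ℕ} [NeZero m] {M : Type*} [NormedAddCommGroup M]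
    (h : HilbertModuleMat m M) (w : Fin n → M)
    (G : Matrix (Fin n × Fin m) (Fin n × Fin m) ℂ)
    (hG : ∀ s t i j, G (s, i) (t, j) = h.inner (w s) (w t) i j)
    (σ : Fin l → ℝ) (hσpos : ∀ s, 0 < σ s)
    (v : Fin l → (Fin n × Fin m → ℂ))
    (hortho : ∀ s t, ∑ a, (starRingEnd ℂ) (v s a) * v t a = if s = t then 1 else 0)
    (hdecomp : ∀ a b, G a b = ∑ s, (σ s : ℂ) * v s a * (starRingEnd ℂ) (v s b))
    (p : Fin l → M)
    (hp : ∀ s, p s = ∑ t, h.smul (w t)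
      (Matrix.of fun i j =>
        if j = (0 : Fin m) then ((Real.sqrt (σ s))⁻¹ : ℂ) * v s (t, i) else 0)) :
    (∀ s t, s ≠ t → h.inner (p s) (p t) = 0) ∧
    (∀ s, h.Normalized (p s) ∧ IsSelfAdjoint (h.inner (p s) (p s)) ∧
      (h.inner (p s) (p s)).rank = 1) ∧
    (∀ t, ∃ c : Fin l → Matrix (Fin m) (Fin m) ℂ, w t = ∑ s, h.smul (p s) (c s)) := by
  obtain rfl : G = h.gramMatrix w := Matrix.ext fun a b => hG a.1 b.1 a.2 b.2
  obtain rfl : p = h.principalAxis w σ v := funext hp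
  have hortho' : ∀ s t, star (v s) ⬝ᵥ v t = if s = t then 1 else 0 := hortho
  have heig := mulVec_eq_smul_of_eq_sum hortho' hdecomp
  have hpp := h.inner_principalAxis_principalAxis w hσpos hortho' heig
  have hproj : ∀ s, IsStarProjection (h.inner (h.principalAxis w σ v s) (h.principalAxis w σ v s)) :=
    fun s => by simpa [hpp] using isStarProjection_single_one (R := ℂ) (0 : Fin m)
  have hrank := rank_single_self (0 : Fin m) (one_ne_zero (α := ℂ))
  refine ⟨fun s r hsr => by simp [hpp, hsr], fun s => ?_, fun t => ⟨_,
    h.eq_sum_smul_inner_of_inner_self_eq_sum (fun s r hsr => by simp [hpp, hsr]) hproj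
      (h.inner_self_eq_sum_inner_principalAxis w hσpos heig hdecomp t)⟩⟩
  simp only [HilbertModuleMat.Normalized, hpp, ↓reduceIte]
  exact ⟨⟨fun h0 => by simp [h0] at hrank, (isStarProjection_single_one _).isIdempotentElem.eq⟩,
    (isStarProjection_single_one _).isSelfAdjoint, hrank⟩

/-- RKHM kernel PCA: given samples `w_1,…,w_n` in a Hilbert C*-module over `ℂ^{m×m}` with
Gram matrix `G = [⟨w_s,w_t⟩]` (an `mn × mn` complex matrix) eigen-decomposed as
`G = Σ_s σ_s v_s v_s*` with `σ_1 ≥ … ≥ σ_l > 0` and orthonormal `v_s`, the principal axes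
`p_s = σ_s^{-1/2} W[v_s,0,…,0]` form an orthonormal system with `⟨p_s,p_s⟩` a rank-one
orthogonal projection, and every `w_t` lies in their `ℂ^{m×m}`-linear span. -/
theorem pca_principal_axes
    {m n l : ℕ} [NeZero m] {M : Type*} [NormedAddCommGroup M] [CompleteSpace M]
    (h : HilbertModuleMat m M) (w : Fin n → M)
    (G : Matrix (Fin n × Fin m) (Fin n × Fin m) ℂ)
    (hG : ∀ s t i j, G (s, i) (t, j) = h.inner (w s) (w t) i j)
    (σ : Fin l → ℝ) (hσpos : ∀ s, 0 < σ s) (hσmono : ∀ s t, s ≤ t → σ t ≤ σ s)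
    (v : Fin l → (Fin n × Fin m → ℂ))
    (hortho : ∀ s t, ∑ a, (starRingEnd ℂ) (v s a) * v t a = if s = t then 1 else 0)
    (hdecomp : ∀ a b, G a b = ∑ s, (σ s : ℂ) * v s a * (starRingEnd ℂ) (v s b))
    (p : Fin l → M)
    (hp : ∀ s, p s = ∑ t, h.smul (w t)
      (Matrix.of fun i j =>
        if j = (0 : Fin m) then ((Real.sqrt (σ s))⁻¹ : ℂ) * v s (t, i) else 0)) :
    (∀ s t, s ≠ t → h.inner (p s) (p t) = 0) ∧
    (∀ s, h.Normalized (p s) ∧ IsSelfAdjoint (h.inner (p s) (p s)) ∧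
      (h.inner (p s) (p s)).rank = 1) ∧
    (∀ t, ∃ c : Fin l → Matrix (Fin m) (Fin m) ℂ, w t = ∑ s, h.smul (p s) (c s)) :=
  pca_principal_axes_general h w G hG σ hσpos v hortho hdecomp p hp
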